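/- Let P ∈ ℂ[X^{±1},Y^{±1}] be exact (η|_C is exact). Then any volume function V : C → ℝ extends continuously to the smooth projective model Ĉ of C. -/

import Mathlib

open MvPolynomial

/-- `η = log|y| d(arg x) − log|x| d(arg y)` as a continuous `ℝ`-linear functional. -/
noncomputable def etaL (p : ℂ × ℂ) : (ℂ × ℂ) →L[ℝ] ℝ :=
  Real.log ‖p.2‖ •
      (Complex.imCLM.comp ((p.1⁻¹ • ContinuousLinearMap.fst ℂ ℂ ℂ).restrictScalars ℝ)) -
    Real.log ‖p.1‖ •
      (Complex.imCLM.comp ((p.2⁻¹ • ContinuousLinearMap.snd ℂ ℂ ℂ).restrictScalars ℝ))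

/-- The smooth part `C` of the zero set of `P` in `(ℂ*)²`. -/
def Csm (P : MvPolynomial (Fin 2) ℂ) : Set (ℂ × ℂ) :=
  {z | z.1 ≠ 0 ∧ z.2 ≠ 0 ∧ eval ![z.1, z.2] P = 0 ∧
    (eval ![z.1, z.2] (pderiv 0 P) ≠ 0 ∨ eval ![z.1, z.2] (pderiv 1 P) ≠ 0)}

/-!
Write `φ = (x, y)` with `x = t ^ p u`, `y = t ^ q v` and `u 0, v 0 ≠ 0`. Then
`d(V ∘ φ) = Im (W t dt)` where `W t * t = c t + O(√|t|)` for the real function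
`c = p log |v| - q log |u|`, smooth at `0`. Since `V ∘ φ` is single-valued, integrating its
differential around small circles forces `c 0 = 0` (this is the condition `log |F(0)| = 0`).
Hence `|d(V ∘ φ)| = O(|t| ^ (-1/2))`; in the coordinates `t = s² e^{iθ}` both partial derivatives
of `V ∘ φ` are then bounded by multiples of `1` and `s`, so `V ∘ φ` is Cauchy at the puncture.
-/

open Complex Metric Filter Set Topology Asymptotics
open scoped Real

section PuncturedPlane

variable {E : Type*} [NormedAddCommGroup E] [NormedSpace ℝ E] {g : ℂ → E} {g' : ℂ → ℂ →L[ℝ] E}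

lemma exists_pos_forall_of_eventually_nhdsNE {p : ℂ → Prop} (h : ∀ᶠ t in 𝓝[≠] (0 : ℂ), p t) :
    ∃ ρ > 0, ∀ t : ℂ, t ≠ 0 → ‖t‖ < ρ → p t := by
  obtain ⟨ρ, hρ, hp⟩ := Metric.eventually_nhds_iff.mp (eventually_nhdsWithin_iff.mp h)
  exact ⟨ρ, hρ, fun t ht htρ => hp (by simpa using htρ) ht⟩

lemma eq_zero_of_tendsto_fderiv_apply_mul_I {c : E}
    (hg : ∀ᶠ t in 𝓝[≠] 0, HasFDerivAt g (g' t) t)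
    (hc : Tendsto (fun t => g' t (t * I)) (𝓝[≠] 0) (𝓝 c)) : c = 0 := by
  refine norm_le_zero_iff.mp (le_of_forall_pos_le_add fun ε hε => ?_)
  obtain ⟨ρ, hρ, hρg⟩ := exists_pos_forall_of_eventually_nhdsNE
    (hg.and (hc.eventually (closedBall_mem_nhds c hε)))
  set γ := circleMap 0 (ρ / 2)
  have hγ : ∀ θ, γ θ ≠ 0 ∧ ‖γ θ‖ < ρ := fun θ =>
    ⟨circleMap_ne_center (by positivity), by
      rw [norm_circleMap_zero, abs_of_pos (half_pos hρ)]; exact half_lt_self hρ⟩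
  have hderiv : ∀ θ : ℝ, HasDerivAt (fun θ => g (γ θ) - θ • c) (g' (γ θ) (γ θ * I) - c) θ :=
    fun θ => ((hρg _ (hγ θ).1 (hγ θ).2).1.comp_hasDerivAt θ
      (hasDerivAt_circleMap 0 (ρ / 2) θ)).sub (by simpa using (hasDerivAt_id θ).smul_const c)
  have hbound : ∀ θ : ℝ, ‖g' (γ θ) (γ θ * I) - c‖ ≤ ε := fun θ => by
    simpa [dist_eq_norm] using (hρg _ (hγ θ).1 (hγ θ).2).2
  have := norm_image_sub_le_of_norm_deriv_le_segment' (a := 0) (b := 2 * π)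
    (fun θ _ => (hderiv θ).hasDerivWithinAt) (fun θ _ => hbound θ) (2 * π)
    (by simp [Real.pi_pos.le])
  rw [show γ (2 * π) = γ 0 by simpa using (periodic_circleMap 0 (ρ / 2)).eq,
    sub_sub_sub_cancel_left, zero_smul, zero_sub, norm_neg, norm_smul, sub_zero,
    Real.norm_of_nonneg Real.two_pi_pos.le] at this
  nlinarith [Real.two_pi_pos]

lemma norm_sub_le_of_norm_mul_norm_fderiv_le {K δ : ℝ}
    (hg : ∀ t : ℂ, t ≠ 0 → ‖t‖ < δ → HasFDerivAt g (g' t) t ∧ ‖t‖ * ‖g' t‖ ≤ K * √‖t‖)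
    {t₁ t₂ : ℂ} (h₁ : t₁ ≠ 0) (h₁δ : ‖t₁‖ < δ) (h₂ : t₂ ≠ 0) (h₂δ : ‖t₂‖ < δ) :
    ‖g t₁ - g t₂‖ ≤ (2 * π + 2) * K * √δ := by
  have hK : 0 ≤ K := by
    have := (hg t₁ h₁ h₁δ).2
    have : 0 < √‖t₁‖ := Real.sqrt_pos.mpr (norm_pos_iff.mpr h₁)
    nlinarith [norm_nonneg t₁, norm_nonneg (g' t₁)]
  -- In the coordinates `t = s² e^{iθ}` the partial derivatives of `g` are `O(1)` and `O(s)`.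
  have hpolar : ∀ s θ : ℝ, s ∈ Ioo 0 √δ → HasFDerivAt g (g' (circleMap 0 (s ^ 2) θ))
      (circleMap 0 (s ^ 2) θ) ∧ s * ‖g' (circleMap 0 (s ^ 2) θ)‖ ≤ K := by
    rintro s θ ⟨hs, hsδ⟩
    have hnorm : ‖circleMap 0 (s ^ 2) θ‖ = s ^ 2 := by simp [sq_abs]
    obtain ⟨hd, hb⟩ := hg (circleMap 0 (s ^ 2) θ) (circleMap_ne_center (by positivity))
      (by rw [hnorm]; exact (Real.lt_sqrt hs.le).mp hsδ)
    rw [hnorm, Real.sqrt_sq hs.le] at hb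
    exact ⟨hd, le_of_mul_le_mul_left (by linarith) hs⟩
  have hangular : ∀ s θ₁ θ₂ : ℝ, s ∈ Ioo 0 √δ →
      ‖g (circleMap 0 (s ^ 2) θ₁) - g (circleMap 0 (s ^ 2) θ₂)‖ ≤ K * s * ‖θ₁ - θ₂‖ := by
    intro s θ₁ θ₂ hs
    refine convex_univ.norm_image_sub_le_of_norm_hasDerivWithin_le
      (f := fun θ => g (circleMap 0 (s ^ 2) θ))
      (fun θ _ => ((hpolar s θ hs).1.comp_hasDerivAt θ
        (hasDerivAt_circleMap 0 (s ^ 2) θ)).hasDerivWithinAt) (fun θ _ => ?_)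
      (mem_univ _) (mem_univ _)
    calc ‖g' (circleMap 0 (s ^ 2) θ) (circleMap 0 (s ^ 2) θ * I)‖
        ≤ ‖g' (circleMap 0 (s ^ 2) θ)‖ * s ^ 2 :=
          ((g' _).le_opNorm _).trans_eq (by
            rw [norm_mul, norm_circleMap_zero, norm_I, mul_one, abs_of_nonneg (sq_nonneg s)])
      _ = s * ‖g' (circleMap 0 (s ^ 2) θ)‖ * s := by ring
      _ ≤ K * s := mul_le_mul_of_nonneg_right (hpolar s θ hs).2 hs.1.le
  have hradial : ∀ s₁ s₂ θ : ℝ, s₁ ∈ Ioo 0 √δ → s₂ ∈ Ioo 0 √δ →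
      ‖g (circleMap 0 (s₁ ^ 2) θ) - g (circleMap 0 (s₂ ^ 2) θ)‖ ≤ 2 * K * ‖s₁ - s₂‖ := by
    intro s₁ s₂ θ hs₁ hs₂
    refine (convex_Ioo 0 √δ).norm_image_sub_le_of_norm_hasDerivWithin_le
      (f := fun s => g (circleMap 0 (s ^ 2) θ))
      (f' := fun s => g' (circleMap 0 (s ^ 2) θ) ((2 * s : ℝ) * exp (θ * I)))
      (fun s hs => ?_) (fun s hs => ?_) hs₂ hs₁
    · have hγ : HasDerivAt (fun s : ℝ => circleMap 0 (s ^ 2) θ) ((2 * s : ℝ) * exp (θ * I)) s := by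
        simpa [circleMap_zero] using (hasDerivAt_pow 2 s).ofReal_comp.mul_const (exp (θ * I))
      exact ((hpolar s θ hs).1.comp_hasDerivAt s hγ).hasDerivWithinAt
    · calc ‖g' (circleMap 0 (s ^ 2) θ) ((2 * s : ℝ) * exp (θ * I))‖
          ≤ ‖g' (circleMap 0 (s ^ 2) θ)‖ * (2 * s) := by
            simpa [abs_of_pos hs.1] using
              (g' (circleMap 0 (s ^ 2) θ)).le_opNorm ((2 * s : ℝ) * exp (θ * I))
        _ = 2 * (s * ‖g' (circleMap 0 (s ^ 2) θ)‖) := by ring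
        _ ≤ 2 * K := by linarith [(hpolar s θ hs).2]
  have hrepr : ∀ t : ℂ, t ≠ 0 → ‖t‖ < δ →
      √‖t‖ ∈ Ioo 0 √δ ∧ circleMap 0 (√‖t‖ ^ 2) (arg t) = t := fun t ht htδ =>
    ⟨⟨Real.sqrt_pos.mpr (norm_pos_iff.mpr ht), Real.sqrt_lt_sqrt (norm_nonneg t) htδ⟩,
      by rw [circleMap_zero, Real.sq_sqrt (norm_nonneg t), norm_mul_exp_arg_mul_I]⟩
  obtain ⟨hs₁, ht₁⟩ := hrepr t₁ h₁ h₁δ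
  obtain ⟨hs₂, ht₂⟩ := hrepr t₂ h₂ h₂δ
  have harg : ‖arg t₁ - arg t₂‖ ≤ 2 * π := by
    rw [Real.norm_eq_abs]
    linarith [abs_sub (arg t₁) (arg t₂), abs_arg_le_pi t₁, abs_arg_le_pi t₂]
  have hsqrt : ‖√‖t₁‖ - √‖t₂‖‖ ≤ √δ := by
    rw [Real.norm_eq_abs, abs_sub_le_iff]; constructor <;> linarith [hs₁.1, hs₁.2, hs₂.1, hs₂.2]
  rw [← ht₁, ← ht₂]
  calc ‖g (circleMap 0 (√‖t₁‖ ^ 2) (arg t₁)) - g (circleMap 0 (√‖t₂‖ ^ 2) (arg t₂))‖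
      ≤ ‖g (circleMap 0 (√‖t₁‖ ^ 2) (arg t₁)) - g (circleMap 0 (√‖t₁‖ ^ 2) (arg t₂))‖ +
        ‖g (circleMap 0 (√‖t₁‖ ^ 2) (arg t₂)) - g (circleMap 0 (√‖t₂‖ ^ 2) (arg t₂))‖ :=
        norm_sub_le_norm_sub_add_norm_sub _ _ _
    _ ≤ K * √‖t₁‖ * (2 * π) + 2 * K * √δ := by
        gcongr
        · exact (hangular _ _ _ hs₁).trans (by gcongr)
        · exact (hradial _ _ _ hs₁ hs₂).trans (by gcongr)
    _ ≤ (2 * π + 2) * K * √δ := by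
        nlinarith [mul_le_mul_of_nonneg_left hs₁.2.le hK, Real.pi_pos]

theorem exists_tendsto_nhdsNE_of_norm_mul_norm_fderiv_le [CompleteSpace E] {K : ℝ}
    (hg : ∀ᶠ t in 𝓝[≠] 0, HasFDerivAt g (g' t) t ∧ ‖t‖ * ‖g' t‖ ≤ K * √‖t‖) :
    ∃ L, Tendsto g (𝓝[≠] 0) (𝓝 L) := by
  obtain ⟨ρ, hρ, hρg⟩ := exists_pos_forall_of_eventually_nhdsNE hg
  refine cauchy_map_iff_exists_tendsto.mp (Metric.cauchy_iff.mpr ⟨map_neBot, fun ε hε => ?_⟩)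
  have hsmall : Tendsto (fun δ => (2 * π + 2) * K * √δ) (𝓝[>] 0) (𝓝 0) :=
    ((continuous_const.mul Real.continuous_sqrt).tendsto' 0 0 (by simp)).mono_left
      nhdsWithin_le_nhds
  obtain ⟨δ, hδε, hδρ⟩ := ((hsmall.eventually (gt_mem_nhds hε)).and (Ioo_mem_nhdsGT hρ)).exists
  have hpunct : {t : ℂ | t ≠ 0 ∧ ‖t‖ < δ} ∈ 𝓝[≠] 0 :=
    mem_nhdsWithin.mpr ⟨ball 0 δ, isOpen_ball, mem_ball_self hδρ.1,
      fun t ⟨htδ, ht⟩ => ⟨ht, by simpa using htδ⟩⟩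
  refine ⟨g '' {t | t ≠ 0 ∧ ‖t‖ < δ}, image_mem_map hpunct, ?_⟩
  rintro _ ⟨t₁, ⟨h₁, h₁δ⟩, rfl⟩ _ ⟨t₂, ⟨h₂, h₂δ⟩, rfl⟩
  rw [dist_eq_norm]
  exact (norm_sub_le_of_norm_mul_norm_fderiv_le (fun t ht htδ => hρg t ht (htδ.trans hδρ.2))
    h₁ h₁δ h₂ h₂δ).trans_lt hδε

end PuncturedPlane

lemma isBigO_id_sqrt_norm : (fun t : ℂ => t) =O[𝓝 0] fun t => √‖t‖ := by
  refine IsBigO.of_bound' ?_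
  filter_upwards [closedBall_mem_nhds (0 : ℂ) one_pos] with t ht
  rw [mem_closedBall_zero_iff] at ht
  rw [Real.norm_of_nonneg (Real.sqrt_nonneg _)]
  exact Real.le_sqrt_of_sq_le (by nlinarith [norm_nonneg t])

lemma isBigO_mul_log_norm_sqrt_norm :
    (fun t : ℂ => t * Real.log ‖t‖) =O[𝓝 0] fun t => √‖t‖ := by
  refine IsBigO.of_bound 2 ?_
  filter_upwards [closedBall_mem_nhds (0 : ℂ) one_pos] with t ht
  rw [mem_closedBall_zero_iff] at ht
  rcases eq_or_ne t 0 with rfl | ht0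
  · simp
  have hlog := Real.abs_log_mul_self_rpow_lt ‖t‖ (1 / 2) (norm_pos_iff.mpr ht0) ht one_half_pos
  rw [← Real.sqrt_eq_rpow, one_div_one_div] at hlog
  have hsq := Real.mul_self_sqrt (norm_nonneg t)
  rw [norm_mul, norm_real, Real.norm_eq_abs, Real.norm_of_nonneg (Real.sqrt_nonneg _)]
  rw [abs_mul, abs_of_nonneg (Real.sqrt_nonneg _)] at hlog
  nlinarith [Real.sqrt_nonneg ‖t‖, abs_nonneg (Real.log ‖t‖)]

lemma norm_imCLM_comp_mul_le (w : ℂ) : ‖imCLM.comp (ContinuousLinearMap.mul ℝ ℂ w)‖ ≤ ‖w‖ :=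
  ContinuousLinearMap.opNorm_le_bound _ (norm_nonneg w) fun h => by
    simpa using abs_im_le_norm (w * h)

theorem exists_tendsto_nhdsNE_of_hasFDerivAt_im_mul {g : ℂ → ℝ} {W : ℂ → ℂ} {c : ℂ → ℝ}
    (hg : ∀ᶠ t in 𝓝[≠] 0, HasFDerivAt g (imCLM.comp (ContinuousLinearMap.mul ℝ ℂ (W t))) t)
    (hc : DifferentiableAt ℝ c 0)
    (hW : (fun t => W t * t - c t) =O[𝓝[≠] 0] fun t => √‖t‖) :
    ∃ L, Tendsto g (𝓝[≠] 0) (𝓝 L) := by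
  have hsqrt : Tendsto (fun t : ℂ => √‖t‖) (𝓝[≠] 0) (𝓝 0) :=
    ((continuous_norm.sqrt).tendsto' 0 0 (by simp)).mono_left nhdsWithin_le_nhds
  have hlim : Tendsto (fun t => W t * t) (𝓝[≠] 0) (𝓝 (c 0 : ℂ)) := by
    have := (hW.trans_tendsto hsqrt).add
      ((continuous_ofReal.continuousAt.comp hc.continuousAt).tendsto.mono_left nhdsWithin_le_nhds)
    simpa using this
  have hc0 : c 0 = 0 := by
    have hre : ∀ t, imCLM.comp (ContinuousLinearMap.mul ℝ ℂ (W t)) (t * I) = (W t * t).re :=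
      fun t => by simp [← mul_assoc]
    refine eq_zero_of_tendsto_fderiv_apply_mul_I hg ?_
    simp only [hre]
    exact (continuous_re.tendsto _).comp hlim
  have hcO : (fun t => (c t : ℂ)) =O[𝓝[≠] 0] fun t => √‖t‖ := by
    have hcO' := hc.isBigO_sub
    simp only [hc0, sub_zero] at hcO'
    refine IsBigO.of_norm_left ?_
    simpa only [norm_real] using
      ((hcO'.trans isBigO_id_sqrt_norm).mono nhdsWithin_le_nhds).norm_left
  have hWO : (fun t => W t * t) =O[𝓝[≠] 0] fun t => √‖t‖ := by simpa using hW.add hcO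
  obtain ⟨K, hK⟩ := hWO.bound
  refine exists_tendsto_nhdsNE_of_norm_mul_norm_fderiv_le (K := K)
    (g' := fun t => imCLM.comp (ContinuousLinearMap.mul ℝ ℂ (W t))) ?_
  filter_upwards [hg, hK] with t hgt hKt
  refine ⟨hgt, ?_⟩
  calc ‖t‖ * ‖imCLM.comp (ContinuousLinearMap.mul ℝ ℂ (W t))‖ ≤ ‖t‖ * ‖W t‖ := by
        gcongr; exact norm_imCLM_comp_mul_le (W t)
    _ = ‖W t * t‖ := by rw [norm_mul, mul_comm]
    _ ≤ K * √‖t‖ := by simpa [Real.norm_of_nonneg (Real.sqrt_nonneg _)] using hKt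

/-- Along a curve `φ = (x, y)`, the pullback `φ^* η` is `Im (etaPullback x y t * dt)`. -/
noncomputable def etaPullback (x y : ℂ → ℂ) (t : ℂ) : ℂ :=
  Real.log ‖y t‖ * logDeriv x t - Real.log ‖x t‖ * logDeriv y t

lemma etaL_apply (p v : ℂ × ℂ) :
    etaL p v = (Real.log ‖p.2‖ * (v.1 / p.1) - Real.log ‖p.1‖ * (v.2 / p.2)).im := by
  simp only [etaL, sub_apply, smul_apply, ContinuousLinearMap.comp_apply,
    ContinuousLinearMap.coe_restrictScalars', imCLM_apply, smul_eq_mul, sub_im, im_ofReal_mul,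
    div_eq_inv_mul]
  rfl

lemma hasFDerivAt_etaPullback {V : ℂ × ℂ → ℝ} {S : Set (ℂ × ℂ)} {x y : ℂ → ℂ} {t : ℂ}
    (hV : HasFDerivWithinAt V (etaL (x t, y t)) S (x t, y t))
    (hx : DifferentiableAt ℂ x t) (hy : DifferentiableAt ℂ y t)
    (hS : ∀ᶠ s in 𝓝 t, (x s, y s) ∈ S) :
    HasFDerivAt (fun s => V (x s, y s))
      (imCLM.comp (ContinuousLinearMap.mul ℝ ℂ (etaPullback x y t))) t := by
  have hφ : HasFDerivAt (fun s => (x s, y s))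
      ((ContinuousLinearMap.toSpanSingleton ℂ (deriv x t, deriv y t)).restrictScalars ℝ) t :=
    (hx.hasDerivAt.prodMk hy.hasDerivAt).hasFDerivAt.restrictScalars ℝ
  refine ((hV.comp t hφ.hasFDerivWithinAt (mapsTo_preimage _ S)).hasFDerivAt hS).congr_fderiv
    (ContinuousLinearMap.ext fun h => ?_)
  simp only [ContinuousLinearMap.comp_apply, etaL_apply, etaPullback, logDeriv_apply,
    ContinuousLinearMap.coe_restrictScalars', ContinuousLinearMap.toSpanSingleton_apply,
    Prod.smul_mk, smul_eq_mul, ContinuousLinearMap.mul_apply', imCLM_apply]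
  ring_nf

lemma logDeriv_eq_of_eventuallyEq_pow_mul {𝕜 : Type*} [NontriviallyNormedField 𝕜]
    {f w : 𝕜 → 𝕜} {n : ℕ} {t : 𝕜} (hf : f =ᶠ[𝓝 t] fun z => z ^ n * w z) (ht : t ≠ 0)
    (hw : w t ≠ 0) (hwd : DifferentiableAt 𝕜 w t) :
    logDeriv f t = n / t + logDeriv w t := by
  rw [logDeriv_apply, hf.deriv_eq, hf.eq_of_nhds, ← logDeriv_apply,
    logDeriv_mul (f := (· ^ n)) t (pow_ne_zero n ht) hw (differentiableAt_pow n) hwd, logDeriv_pow]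

lemma log_norm_pow_mul {𝕜 : Type*} [NormedDivisionRing 𝕜] {t w : 𝕜} (n : ℕ) (ht : t ≠ 0)
    (hw : w ≠ 0) : Real.log ‖t ^ n * w‖ = n * Real.log ‖t‖ + Real.log ‖w‖ := by
  rw [norm_mul, norm_pow, Real.log_mul (by positivity) (norm_ne_zero_iff.mpr hw), Real.log_pow]

lemma etaPullback_mul_sub_eq {x y u v : ℂ → ℂ} {p q : ℕ} {t : ℂ}
    (hx : x =ᶠ[𝓝 t] fun z => z ^ p * u z) (hy : y =ᶠ[𝓝 t] fun z => z ^ q * v z) (ht : t ≠ 0)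
    (hu : u t ≠ 0) (hv : v t ≠ 0) (hud : DifferentiableAt ℂ u t) (hvd : DifferentiableAt ℂ v t) :
    etaPullback x y t * t - (p * Real.log ‖v t‖ - q * Real.log ‖u t‖ : ℝ) =
      t * Real.log ‖t‖ * (q * logDeriv u t - p * logDeriv v t) +
        t * (Real.log ‖v t‖ * logDeriv u t - Real.log ‖u t‖ * logDeriv v t) := by
  rw [etaPullback, logDeriv_eq_of_eventuallyEq_pow_mul hx ht hu hud,
    logDeriv_eq_of_eventuallyEq_pow_mul hy ht hv hvd, hx.eq_of_nhds, hy.eq_of_nhds,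
    log_norm_pow_mul p ht hu, log_norm_pow_mul q ht hv]
  push_cast
  field_simp
  ring

lemma exists_etaPullback_mul_sub_isBigO {x y u v : ℂ → ℂ} {p q : ℕ}
    (hu : AnalyticAt ℂ u 0) (hv : AnalyticAt ℂ v 0) (hu0 : u 0 ≠ 0) (hv0 : v 0 ≠ 0)
    (hx : x =ᶠ[𝓝 0] fun z => z ^ p * u z) (hy : y =ᶠ[𝓝 0] fun z => z ^ q * v z) :
    ∃ c : ℂ → ℝ, DifferentiableAt ℝ c 0 ∧
      (fun t => etaPullback x y t * t - c t) =O[𝓝[≠] 0] fun t => √‖t‖ := by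
  have hlog : ∀ w : ℂ → ℂ, AnalyticAt ℂ w 0 → w 0 ≠ 0 →
      DifferentiableAt ℝ (fun t => Real.log ‖w t‖) 0 := fun w hw hw0 =>
    ((hw.differentiableAt.restrictScalars ℝ).norm ℝ hw0).log (norm_ne_zero_iff.mpr hw0)
  have hlogDeriv : ∀ w : ℂ → ℂ, AnalyticAt ℂ w 0 → w 0 ≠ 0 → ContinuousAt (logDeriv w) 0 :=
    fun w hw hw0 => hw.deriv.continuousAt.div hw.continuousAt hw0
  refine ⟨fun t => p * Real.log ‖v t‖ - q * Real.log ‖u t‖,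
    ((hlog v hv hv0).const_mul _).sub ((hlog u hu hu0).const_mul _), ?_⟩
  set a : ℂ → ℂ := fun t => q * logDeriv u t - p * logDeriv v t
  set b : ℂ → ℂ := fun t => Real.log ‖v t‖ * logDeriv u t - Real.log ‖u t‖ * logDeriv v t
  have ha : ContinuousAt a 0 :=
    (continuousAt_const.mul (hlogDeriv u hu hu0)).sub (continuousAt_const.mul (hlogDeriv v hv hv0))
  have hb : ContinuousAt b 0 :=
    ((hlog v hv hv0).continuousAt.ofReal.mul (hlogDeriv u hu hu0)).sub
      ((hlog u hu hu0).continuousAt.ofReal.mul (hlogDeriv v hv hv0))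
  have hid : (fun t => (t * Real.log ‖t‖) * a t + t * b t) =ᶠ[𝓝[≠] 0]
      fun t => etaPullback x y t * t - (p * Real.log ‖v t‖ - q * Real.log ‖u t‖ : ℝ) := by
    filter_upwards [self_mem_nhdsWithin, nhdsWithin_le_nhds hx.eventuallyEq_nhds,
      nhdsWithin_le_nhds hy.eventuallyEq_nhds, nhdsWithin_le_nhds hu.eventually_analyticAt,
      nhdsWithin_le_nhds hv.eventually_analyticAt,
      nhdsWithin_le_nhds (hu.continuousAt.eventually_ne hu0),
      nhdsWithin_le_nhds (hv.continuousAt.eventually_ne hv0)] with t ht hxt hyt hut hvt hut0 hvt0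
    exact (etaPullback_mul_sub_eq hxt hyt ht hut0 hvt0 hut.differentiableAt
      hvt.differentiableAt).symm
  refine IsBigO.congr' ?_ hid EventuallyEq.rfl
  simpa using ((isBigO_mul_log_norm_sqrt_norm.mul (ha.tendsto.isBigO_one ℝ)).add
    (isBigO_id_sqrt_norm.mul (hb.tendsto.isBigO_one ℝ))).mono nhdsWithin_le_nhds

lemma AnalyticAt.exists_eventuallyEq_pow_mul {f : ℂ → ℂ} (hf : AnalyticAt ℂ f 0)
    (hne : ∀ᶠ t in 𝓝[≠] 0, f t ≠ 0) :
    ∃ (n : ℕ) (w : ℂ → ℂ), AnalyticAt ℂ w 0 ∧ w 0 ≠ 0 ∧ f =ᶠ[𝓝 0] fun z => z ^ n * w z := by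
  obtain ⟨n, w, hw, hw0, hfw⟩ := hf.exists_eventuallyEq_pow_smul_nonzero_iff.mpr fun h0 =>
    ((h0.filter_mono nhdsWithin_le_nhds).and hne).exists.elim fun _ ht => ht.2 ht.1
  exact ⟨n, w, hw, hw0, hfw.mono fun z hz => by simpa using hz⟩

/-- Continuity of the extension to `Ĉ` is stated in a chart: `φ` parametrizes a punctured
neighbourhood of a point of `Ĉ \ C`. -/
theorem volume_function_extends_continuously
    (P : MvPolynomial (Fin 2) ℂ) (V : ℂ × ℂ → ℝ)
    (hV : ∀ z ∈ Csm P, HasFDerivWithinAt V (etaL z) (Csm P) z)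
    (φ : ℂ → ℂ × ℂ) (r : ℝ) (hr : 0 < r)
    (hφ1 : ∀ t ∈ Metric.ball (0 : ℂ) r, AnalyticAt ℂ (fun s => (φ s).1) t)
    (hφ2 : ∀ t ∈ Metric.ball (0 : ℂ) r, AnalyticAt ℂ (fun s => (φ s).2) t)
    (hφC : ∀ t ∈ Metric.ball (0 : ℂ) r, t ≠ 0 → φ t ∈ Csm P) :
    ∃ L : ℝ, Filter.Tendsto (fun t => V (φ t))
      (nhdsWithin 0 (Metric.ball (0 : ℂ) r \ {0})) (nhds L) := by
  have hpunct : ∀ᶠ t in 𝓝[≠] (0 : ℂ), t ∈ ball 0 r \ {0} :=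
    mem_of_superset (inter_mem_nhdsWithin _ (ball_mem_nhds 0 hr)) fun _ ⟨ht0, htr⟩ => ⟨htr, ht0⟩
  have hφC' : ∀ᶠ t in 𝓝[≠] (0 : ℂ), φ t ∈ Csm P := hpunct.mono fun t ht => hφC t ht.1 ht.2
  obtain ⟨p, u, hu, hu0, hxu⟩ := (hφ1 0 (mem_ball_self hr)).exists_eventuallyEq_pow_mul
    (hφC'.mono fun _ ht => ht.1)
  obtain ⟨q, v, hv, hv0, hyv⟩ := (hφ2 0 (mem_ball_self hr)).exists_eventuallyEq_pow_mul
    (hφC'.mono fun _ ht => ht.2.1)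
  obtain ⟨c, hc, hcW⟩ := exists_etaPullback_mul_sub_isBigO hu hv hu0 hv0 hxu hyv
  have hg : ∀ᶠ t in 𝓝[≠] 0, HasFDerivAt (fun t => V (φ t)) (imCLM.comp
      (ContinuousLinearMap.mul ℝ ℂ (etaPullback (fun s => (φ s).1) (fun s => (φ s).2) t))) t := by
    filter_upwards [hpunct] with t ht
    refine hasFDerivAt_etaPullback (hV _ (hφC t ht.1 ht.2)) (hφ1 t ht.1).differentiableAt
      (hφ2 t ht.1).differentiableAt ?_
    filter_upwards [(isOpen_ball.sdiff isClosed_singleton).mem_nhds ht] with s hs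
    exact hφC s hs.1 hs.2
  obtain ⟨L, hL⟩ := exists_tendsto_nhdsNE_of_hasFDerivAt_im_mul hg hc hcW
  exact ⟨L, hL.mono_left (nhdsWithin_mono _ fun _ ht => ht.2)⟩
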